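/- arXiv:2201.10843 — 4 statements merged into one kernel-verified Lean document; each statement's English description precedes it below -/
import Mathlib

section
/- The map (u,w) ↦ u is a bounded linear mapping from 𝒵 into H¹(I;ℍ¹(Ω)'); in particular, for all (u,w) ∈ 𝒵 one has ‖∂ₜu‖_{L₂(I;ℍ¹(Ω)')} ≤ ‖∂ₜu + div_x w‖_{L₂(I×Ω)} + ‖w‖_{L₂(I×Ω)}. -/
open scoped RealInnerProductSpace

/-- **(Lemma 2.3): `(u,w) ↦ u` is a bounded linear map from `𝒵` into `H¹(I;ℍ¹(Ω)')`;
in particular `‖∂ₜu‖_{L₂(I;ℍ¹(Ω)')} ≤ ‖∂ₜu + div_x w‖_{L₂(I×Ω)} + ‖w‖_{L₂(I×Ω)}`.**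

Abstract rendering (see the file for statement 0 for the dictionary):
* `V` = `L₂(I;ℍ¹(Ω))`, `Wm` = `L₂(I;L₂(Ω;𝕊))`, `L` = `L₂(I×Ω)ⁿ`,
  `Mamb` = `L₂(I×Ω)^{n×n}`, `L0` = `L₂(I×Ω)`, `Hd` = `H¹(I;L_{2,0}(Ω))`,
  `T0` the test fields, `T` the boundary-trace target.
A member of `𝒵` is a quadruple `(u,w,f,g)` with `f = ∂ₜu + div_x w ∈ L₂(I×Ω)ⁿ`
(expressed through test fields), `ι_H g = div_x u` and `Γ(u,w) = 0`; its squared graph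
norm is `‖u‖² + ‖w‖² + ‖f‖² + ‖g‖²`.

Since `L₂(I;ℍ¹(Ω)') ≅ (L₂(I;ℍ¹(Ω)))' = V'`, the time derivative `∂ₜu` belonging to
`L₂(I;ℍ¹(Ω)')` with the asserted bound is expressed as: there is a continuous linear
functional `φ : V →L[ℝ] ℝ` representing the distribution `∂ₜu` (i.e. agreeing with it on
test fields) with `‖φ‖ ≤ ‖f‖ + ‖w‖`.  Moreover `u` itself, viewed in `L₂(I;ℍ¹(Ω)')`,
is the functional `v ↦ ⟪u,v⟫_{L₂(I×Ω)}`, and boundedness of `(u,w) ↦ u` into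
`H¹(I;ℍ¹(Ω)')` is the final estimate against the graph norm. -/
theorem time_derivative_in_dual_bound
    {V Wm L Mamb L0 Hd T T0 : Type*}
    [NormedAddCommGroup V] [InnerProductSpace ℝ V] [CompleteSpace V]
    [NormedAddCommGroup Wm] [InnerProductSpace ℝ Wm] [CompleteSpace Wm]
    [NormedAddCommGroup L] [InnerProductSpace ℝ L] [CompleteSpace L]
    [NormedAddCommGroup Mamb] [InnerProductSpace ℝ Mamb] [CompleteSpace Mamb]
    [NormedAddCommGroup L0] [InnerProductSpace ℝ L0] [CompleteSpace L0]
    [NormedAddCommGroup Hd] [InnerProductSpace ℝ Hd] [CompleteSpace Hd]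
    [NormedAddCommGroup T] [NormedSpace ℝ T]
    [AddCommGroup T0] [Module ℝ T0]
    (ιVL : V →L[ℝ] L) (hιVL : ∀ v : V, ‖ιVL v‖ ≤ ‖v‖)   -- `‖v‖_{L₂(I×Ω)} ≤ ‖v‖_{L₂(I;ℍ¹)}`
    (E : Wm →L[ℝ] Mamb) (hE : ∀ w : Wm, ‖E w‖ = ‖w‖)
    (grad : V →L[ℝ] Mamb) (hgrad : ∀ v : V, ‖grad v‖ ≤ ‖v‖) -- `‖∇ₓv‖_{L₂} ≤ ‖v‖_{L₂(I;ℍ¹)}`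
    (divx : V →L[ℝ] L0) (ιH : Hd →L[ℝ] L0)
    (j : T0 →ₗ[ℝ] V) (dt0 : T0 →ₗ[ℝ] L) (gr0 : T0 →ₗ[ℝ] Mamb)
    (hco : ∀ ψ : T0, gr0 ψ = grad (j ψ))
    (Γ : V × Wm → T) :
    ∃ C > 0, ∀ (u : V) (w : Wm) (f : L) (g : Hd),
      -- `(u,w) ∈ 𝒵` with `f = ∂ₜu + div_x w`, `g = div_x u`:
      (∀ ψ : T0, ⟪f, ιVL (j ψ)⟫ = - ⟪ιVL u, dt0 ψ⟫ - ⟪E w, gr0 ψ⟫) →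
      ιH g = divx u → Γ (u, w) = 0 →
      ∃ φ : V →L[ℝ] ℝ,
        -- `φ` is (the extension to `V` of) the distribution `∂ₜu`:
        (∀ ψ : T0, φ (j ψ) = - ⟪ιVL u, dt0 ψ⟫) ∧
        -- `‖∂ₜu‖_{L₂(I;ℍ¹(Ω)')} ≤ ‖∂ₜu + div_x w‖_{L₂(I×Ω)} + ‖w‖_{L₂(I×Ω)}`:
        ‖φ‖ ≤ ‖f‖ + ‖w‖ ∧
        -- `(u,w) ↦ u ∈ 𝓛(𝒵, H¹(I;ℍ¹(Ω)'))`: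
        ‖((innerSL ℝ (ιVL u)).comp ιVL : V →L[ℝ] ℝ)‖ + ‖φ‖
          ≤ C * Real.sqrt (‖u‖ ^ 2 + ‖w‖ ^ 2 + ‖f‖ ^ 2 + ‖g‖ ^ 2) := by
  refine ⟨2, by norm_num, fun u w f g hf _ _ => ?_⟩
  refine ⟨(innerSL ℝ f).comp ιVL + (innerSL ℝ (E w)).comp grad, ?_, ?_, ?_⟩
  · intro ψ
    have := hf ψ
    simp only [ContinuousLinearMap.add_apply, ContinuousLinearMap.comp_apply,
      innerSL_apply_apply, hco ψ] at this ⊢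
    linarith
  · refine ContinuousLinearMap.opNorm_le_bound _ (by positivity) fun v => ?_
    calc ‖((innerSL ℝ f).comp ιVL + (innerSL ℝ (E w)).comp grad) v‖
        ≤ ‖⟪f, ιVL v⟫‖ + ‖⟪E w, grad v⟫‖ := by
          simpa using norm_add_le (⟪f, ιVL v⟫) (⟪E w, grad v⟫)
      _ ≤ ‖f‖ * ‖ιVL v‖ + ‖E w‖ * ‖grad v‖ := by
          gcongr <;> exact norm_inner_le_norm _ _
      _ ≤ ‖f‖ * ‖v‖ + ‖w‖ * ‖v‖ := by
          rw [hE]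
          exact add_le_add (mul_le_mul_of_nonneg_left (hιVL v) (norm_nonneg f))
            (mul_le_mul_of_nonneg_left (hgrad v) (norm_nonneg w))
      _ = (‖f‖ + ‖w‖) * ‖v‖ := by ring
  · have hφ : ‖((innerSL ℝ f).comp ιVL + (innerSL ℝ (E w)).comp grad : V →L[ℝ] ℝ)‖
        ≤ ‖f‖ + ‖w‖ := by
      refine ContinuousLinearMap.opNorm_le_bound _ (by positivity) fun v => ?_
      calc ‖((innerSL ℝ f).comp ιVL + (innerSL ℝ (E w)).comp grad) v‖
          ≤ ‖⟪f, ιVL v⟫‖ + ‖⟪E w, grad v⟫‖ := by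
            simpa using norm_add_le (⟪f, ιVL v⟫) (⟪E w, grad v⟫)
        _ ≤ ‖f‖ * ‖ιVL v‖ + ‖E w‖ * ‖grad v‖ := by
            gcongr <;> exact norm_inner_le_norm _ _
        _ ≤ ‖f‖ * ‖v‖ + ‖w‖ * ‖v‖ := by
            rw [hE]
            exact add_le_add (mul_le_mul_of_nonneg_left (hιVL v) (norm_nonneg f))
              (mul_le_mul_of_nonneg_left (hgrad v) (norm_nonneg w))
        _ = (‖f‖ + ‖w‖) * ‖v‖ := by ring
    have hu : ‖((innerSL ℝ (ιVL u)).comp ιVL : V →L[ℝ] ℝ)‖ ≤ ‖u‖ := by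
      refine ContinuousLinearMap.opNorm_le_bound _ (norm_nonneg _) fun v => ?_
      calc ‖((innerSL ℝ (ιVL u)).comp ιVL) v‖ = ‖⟪ιVL u, ιVL v⟫‖ := rfl
        _ ≤ ‖ιVL u‖ * ‖ιVL v‖ := norm_inner_le_norm _ _
        _ ≤ ‖u‖ * ‖v‖ := mul_le_mul (hιVL u) (hιVL v) (norm_nonneg _) (norm_nonneg _)
    have hS : (0:ℝ) ≤ ‖u‖ ^ 2 + ‖w‖ ^ 2 + ‖f‖ ^ 2 + ‖g‖ ^ 2 := by positivity
    have key : ‖u‖ + (‖f‖ + ‖w‖) ≤ 2 * Real.sqrt (‖u‖ ^ 2 + ‖w‖ ^ 2 + ‖f‖ ^ 2 + ‖g‖ ^ 2) := by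
      have h1 : (‖u‖ + (‖f‖ + ‖w‖)) ^ 2 ≤ 4 * (‖u‖ ^ 2 + ‖w‖ ^ 2 + ‖f‖ ^ 2 + ‖g‖ ^ 2) := by
        nlinarith [sq_nonneg (‖u‖ - ‖f‖), sq_nonneg (‖u‖ - ‖w‖), sq_nonneg (‖f‖ - ‖w‖),
          sq_nonneg ‖g‖, sq_nonneg (‖u‖ + ‖f‖ + ‖w‖)]
      have h2 : ‖u‖ + (‖f‖ + ‖w‖) ≤ Real.sqrt (4 * (‖u‖ ^ 2 + ‖w‖ ^ 2 + ‖f‖ ^ 2 + ‖g‖ ^ 2)) := by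
        rw [show (4:ℝ) * (‖u‖ ^ 2 + ‖w‖ ^ 2 + ‖f‖ ^ 2 + ‖g‖ ^ 2)
            = (2 * Real.sqrt (‖u‖ ^ 2 + ‖w‖ ^ 2 + ‖f‖ ^ 2 + ‖g‖ ^ 2)) ^ 2 by
            rw [mul_pow, Real.sq_sqrt hS]; ring]
        rw [Real.sqrt_sq (by positivity)]
        nlinarith [Real.sq_sqrt hS, Real.sqrt_nonneg (‖u‖ ^ 2 + ‖w‖ ^ 2 + ‖f‖ ^ 2 + ‖g‖ ^ 2),
          h1]
      calc ‖u‖ + (‖f‖ + ‖w‖) ≤ Real.sqrt (4 * (‖u‖ ^ 2 + ‖w‖ ^ 2 + ‖f‖ ^ 2 + ‖g‖ ^ 2)) := h2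
        _ = 2 * Real.sqrt (‖u‖ ^ 2 + ‖w‖ ^ 2 + ‖f‖ ^ 2 + ‖g‖ ^ 2) := by
            rw [show (4:ℝ) = 2 ^ 2 by norm_num, Real.sqrt_mul (by positivity),
              Real.sqrt_sq (by norm_num)]
        _ = _ := rfl
    linarith
end

section
/- For every pair (u,w) ∈ 𝒵₂, the distributional spatial divergence div_x w extends to an element of L₂(I;ℍ¹(Ω)') with ‖div_x w‖_{L₂(I;ℍ¹(Ω)')} ≤ ‖w‖_{L₂(I×Ω)}; equivalently, ∫_I∫_Ω w : ∇_x v dx dt = −∫_I∫_Ω div_x w · v dx dt for all v ∈ L₂(I;ℍ¹(Ω)). -/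
open scoped RealInnerProductSpace

/-- **(Equation (2.4)): for `(u,w) ∈ 𝒵₂`, the distributional spatial divergence
`div_x w` extends to an element of `L₂(I;ℍ¹(Ω)')` with norm `≤ ‖w‖_{L₂(I×Ω)}`;
equivalently `∫_I∫_Ω w : ∇ₓv dx dt = −∫_I∫_Ω div_x w · v dx dt` for all
`v ∈ L₂(I;ℍ¹(Ω))`.**

Abstract rendering:
* `V` = `L₂(I;ℍ¹(Ω))`, `L` = `L₂(I×Ω)ⁿ`, `Mamb` = `L₂(I×Ω)^{n×n}`,
  `T0` the test fields `𝒟(I×Ω)ⁿ`, `T` the boundary-trace target.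
`𝒵₂` consists of pairs `(u,w) ∈ L₂(I×Ω)ⁿ × L₂(I×Ω)^{n×n}` such that there is
`f = ∂ₜu + div_x w ∈ L₂(I×Ω)ⁿ` (expressed through test fields via `j, dt0, gr0`)
and such that the boundary trace `(Id − nnᵀ) w n` vanishes (`Γ (u,w) = 0`).
Since `L₂(I;ℍ¹(Ω)') ≅ V'`, the claim is: there is `φ ∈ V'` which agrees with the
distribution `div_x w` on test fields, satisfies the integration-by-parts identity
`⟪w, ∇ₓ v⟫_{L₂(I×Ω)} = −φ(v)` for every `v ∈ V`, and has `‖φ‖_{V'} ≤ ‖w‖`. -/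
theorem div_w_extends_to_dual
    {V L Mamb T T0 : Type*}
    [NormedAddCommGroup V] [InnerProductSpace ℝ V] [CompleteSpace V]
    [NormedAddCommGroup L] [InnerProductSpace ℝ L] [CompleteSpace L]
    [NormedAddCommGroup Mamb] [InnerProductSpace ℝ Mamb] [CompleteSpace Mamb]
    [NormedAddCommGroup T] [NormedSpace ℝ T]
    [AddCommGroup T0] [Module ℝ T0]
    (ιVL : V →L[ℝ] L) (hιVL : ∀ v : V, ‖ιVL v‖ ≤ ‖v‖)
    (grad : V →L[ℝ] Mamb) (hgrad : ∀ v : V, ‖grad v‖ ≤ ‖v‖)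
    (j : T0 →ₗ[ℝ] V) (dt0 : T0 →ₗ[ℝ] L) (gr0 : T0 →ₗ[ℝ] Mamb)
    (hco : ∀ ψ : T0, gr0 ψ = grad (j ψ))
    (Γ : L × Mamb → T) :
    ∀ (u : L) (w : Mamb) (f : L),
      -- `(u,w) ∈ 𝒵₂`, with `f = ∂ₜu + div_x w ∈ L₂(I×Ω)ⁿ`:
      (∀ ψ : T0, ⟪f, ιVL (j ψ)⟫ = - ⟪u, dt0 ψ⟫ - ⟪w, gr0 ψ⟫) →
      Γ (u, w) = 0 →
      ∃ φ : V →L[ℝ] ℝ,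
        -- `φ` agrees with the distributional divergence `div_x w` on test fields:
        (∀ ψ : T0, φ (j ψ) = - ⟪w, gr0 ψ⟫) ∧
        -- the integration-by-parts identity for all `v ∈ L₂(I;ℍ¹(Ω))`:
        (∀ v : V, ⟪w, grad v⟫ = - φ v) ∧
        -- `‖div_x w‖_{L₂(I;ℍ¹(Ω)')} ≤ ‖w‖_{L₂(I×Ω)}`:
        ‖φ‖ ≤ ‖w‖ := by
  intro u w f _ _
  refine ⟨-((innerSL ℝ w).comp grad), ?_, ?_, ?_⟩
  · intro ψ
    simp [hco ψ]
  · intro v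
    simp
  · refine ContinuousLinearMap.opNorm_le_bound _ (norm_nonneg w) fun v => ?_
    calc ‖(-((innerSL ℝ w).comp grad)) v‖ = ‖⟪w, grad v⟫‖ := by simp
      _ ≤ ‖w‖ * ‖grad v‖ := norm_inner_le_norm w (grad v)
      _ ≤ ‖w‖ * ‖v‖ := by
          exact mul_le_mul_of_nonneg_left (hgrad v) (norm_nonneg w)
end

section
/- The map (u,w) ↦ (Id − nnᵀ)w n, defined for smooth pairs by the integration-by-parts identity ∫_I∫_{∂Ω} (Id − nnᵀ)w n · v ds dt = ∫_I∫_Ω (∂ₜu + div_x w)·v + u·∂ₜv + w : ∇_x v dx dt valid for all v ∈ V, extends to a bounded linear mapping from 𝒵₁ into (V/V₀)'. -/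
open scoped RealInnerProductSpace

/-- **(Within the proof of Lemma 2.1): the boundary trace
`(u,w) ↦ (Id − nnᵀ) w n`, defined for smooth pairs through the integration-by-parts
identity
`∫_I∫_{∂Ω} (Id − nnᵀ) w n · v ds dt
   = ∫_I∫_Ω (∂ₜu + div_x w)·v + u·∂ₜv + w : ∇ₓ v dx dt`  (for all `v ∈ V`),
extends to a bounded linear map from `𝒵₁` into `(V/V₀)'`.**

Abstract rendering:
* `L` = `L₂(I×Ω)ⁿ`, `Mamb` = `L₂(I×Ω)^{n×n}`,
* `Vsp` = `V = H¹₀(I;L₂(Ω)ⁿ) ∩ L₂(I;ℍ¹(Ω))` with the three continuous component maps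
  `ιt v = v`, `dtV v = ∂ₜ v` (both into `L₂(I×Ω)ⁿ`) and `gradV v = ∇ₓ v` (into
  `L₂(I×Ω)^{n×n}`), each bounded by `‖v‖_V`,
* `V₀ = {v ∈ V : v = 0 on I×∂Ω}`, which contains the test fields `jV(T0)` and is
  their closure.
`𝒵₁` consists of pairs `(u,w) ∈ L₂(I×Ω)ⁿ × L₂(I×Ω)^{n×n}` with
`f := ∂ₜu + div_x w ∈ L₂(I×Ω)ⁿ`, i.e. `∫∫ f·ψ + u·∂ₜψ + w:∇ₓψ = 0` for all test
fields `ψ`, with squared graph norm `‖u‖² + ‖w‖² + ‖f‖²`.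

For `(u,w,f) ∈ 𝒵₁` and `v ∈ V`, the right-hand side of the identity is
`Γ(u,w,f)(v) := ⟪f, ιt v⟫ + ⟪u, dtV v⟫ + ⟪w, gradV v⟫`; it is linear in `(u,w,f)` and
in `v`.  The assertion that it defines a bounded map `𝒵₁ → (V/V₀)'` is: it vanishes
on `V₀`, and it is bounded by (a multiple of) the graph norm of `(u,w,f)` times the
quotient norm `inf_{v₀ ∈ V₀} ‖v + v₀‖` of `v`. -/
theorem trace_bounded_into_quotient_dual
    {L Mamb Vsp T0 : Type*}
    [NormedAddCommGroup L] [InnerProductSpace ℝ L] [CompleteSpace L]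
    [NormedAddCommGroup Mamb] [InnerProductSpace ℝ Mamb] [CompleteSpace Mamb]
    [NormedAddCommGroup Vsp] [InnerProductSpace ℝ Vsp] [CompleteSpace Vsp]
    [AddCommGroup T0] [Module ℝ T0]
    (ιt : Vsp →L[ℝ] L) (dtV : Vsp →L[ℝ] L) (gradV : Vsp →L[ℝ] Mamb)
    (hιt : ∀ v, ‖ιt v‖ ≤ ‖v‖) (hdtV : ∀ v, ‖dtV v‖ ≤ ‖v‖)
    (hgradV : ∀ v, ‖gradV v‖ ≤ ‖v‖)
    (V₀ : Submodule ℝ Vsp)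
    (jV : T0 →ₗ[ℝ] Vsp) (hjV : ∀ ψ : T0, jV ψ ∈ V₀)
    (hdense : (V₀ : Set Vsp) ⊆ closure (Set.range fun ψ : T0 => jV ψ)) :
    ∃ C > 0, ∀ (u : L) (w : Mamb) (f : L),
      -- `(u,w) ∈ 𝒵₁` with `f = ∂ₜu + div_x w ∈ L₂(I×Ω)ⁿ`:
      (∀ ψ : T0, ⟪f, ιt (jV ψ)⟫ + ⟪u, dtV (jV ψ)⟫ + ⟪w, gradV (jV ψ)⟫ = 0) →
      -- the trace functional vanishes on `V₀`, hence lives on `V/V₀` ...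
      (∀ v ∈ V₀, ⟪f, ιt v⟫ + ⟪u, dtV v⟫ + ⟪w, gradV v⟫ = 0) ∧
      -- ... and is bounded by the `𝒵₁`-graph norm times the quotient norm:
      (∀ v : Vsp, ∀ v₀ ∈ V₀,
        |⟪f, ιt v⟫ + ⟪u, dtV v⟫ + ⟪w, gradV v⟫|
          ≤ C * Real.sqrt (‖u‖ ^ 2 + ‖w‖ ^ 2 + ‖f‖ ^ 2) * ‖v + v₀‖) := by
  refine ⟨3, by norm_num, fun u w f hZ => ?_⟩
  set g : Vsp → ℝ := fun v => ⟪f, ιt v⟫ + ⟪u, dtV v⟫ + ⟪w, gradV v⟫ with hg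
  have hgcont : Continuous g := by
    apply Continuous.add
    apply Continuous.add
    · exact (continuous_const.inner (ιt.continuous))
    · exact (continuous_const.inner (dtV.continuous))
    · exact (continuous_const.inner (gradV.continuous))
  have hzero : ∀ v ∈ V₀, g v = 0 := by
    intro v hv
    have hsub : (Set.range fun ψ : T0 => jV ψ) ⊆ {x | g x = 0} := by
      rintro x ⟨ψ, rfl⟩; exact hZ ψ
    have hclosed : IsClosed {x | g x = 0} := isClosed_eq hgcont continuous_const
    exact hclosed.closure_subset ((closure_mono hsub) (hdense hv))
  refine ⟨hzero, fun v v₀ hv₀ => ?_⟩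
  have hadd : g (v + v₀) = g v + g v₀ := by
    simp only [hg, map_add, inner_add_right]; ring
  have heq : g v = g (v + v₀) := by rw [hadd, hzero v₀ hv₀, add_zero]
  have hS : (0:ℝ) ≤ ‖u‖ ^ 2 + ‖w‖ ^ 2 + ‖f‖ ^ 2 := by positivity
  have hu : ‖u‖ ≤ Real.sqrt (‖u‖ ^ 2 + ‖w‖ ^ 2 + ‖f‖ ^ 2) := by
    have h := Real.sqrt_le_sqrt (show ‖u‖ ^ 2 ≤ ‖u‖ ^ 2 + ‖w‖ ^ 2 + ‖f‖ ^ 2 by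
      nlinarith [sq_nonneg ‖u‖, sq_nonneg ‖w‖, sq_nonneg ‖f‖])
    rwa [Real.sqrt_sq (norm_nonneg u)] at h
  have hw : ‖w‖ ≤ Real.sqrt (‖u‖ ^ 2 + ‖w‖ ^ 2 + ‖f‖ ^ 2) := by
    have h := Real.sqrt_le_sqrt (show ‖w‖ ^ 2 ≤ ‖u‖ ^ 2 + ‖w‖ ^ 2 + ‖f‖ ^ 2 by
      nlinarith [sq_nonneg ‖u‖, sq_nonneg ‖w‖, sq_nonneg ‖f‖])
    rwa [Real.sqrt_sq (norm_nonneg w)] at h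
  have hf : ‖f‖ ≤ Real.sqrt (‖u‖ ^ 2 + ‖w‖ ^ 2 + ‖f‖ ^ 2) := by
    have h := Real.sqrt_le_sqrt (show ‖f‖ ^ 2 ≤ ‖u‖ ^ 2 + ‖w‖ ^ 2 + ‖f‖ ^ 2 by
      nlinarith [sq_nonneg ‖u‖, sq_nonneg ‖w‖, sq_nonneg ‖f‖])
    rwa [Real.sqrt_sq (norm_nonneg f)] at h
  have hnv : (0:ℝ) ≤ ‖v + v₀‖ := norm_nonneg _
  calc |g v| = |g (v + v₀)| := by rw [heq]
    _ ≤ |⟪f, ιt (v + v₀)⟫| + |⟪u, dtV (v + v₀)⟫| + |⟪w, gradV (v + v₀)⟫| := by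
        simp only [hg]; exact (abs_add_le _ _).trans (by gcongr; exact abs_add_le _ _)
    _ ≤ ‖f‖ * ‖ιt (v + v₀)‖ + ‖u‖ * ‖dtV (v + v₀)‖ + ‖w‖ * ‖gradV (v + v₀)‖ := by
        gcongr <;> exact abs_real_inner_le_norm _ _
    _ ≤ ‖f‖ * ‖v + v₀‖ + ‖u‖ * ‖v + v₀‖ + ‖w‖ * ‖v + v₀‖ := by
        gcongr
        exacts [hιt _, hdtV _, hgradV _]
    _ = (‖f‖ + ‖u‖ + ‖w‖) * ‖v + v₀‖ := by ring
    _ ≤ 3 * Real.sqrt (‖u‖ ^ 2 + ‖w‖ ^ 2 + ‖f‖ ^ 2) * ‖v + v₀‖ := by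
        have : ‖f‖ + ‖u‖ + ‖w‖ ≤ 3 * Real.sqrt (‖u‖ ^ 2 + ‖w‖ ^ 2 + ‖f‖ ^ 2) := by
          linarith
        exact mul_le_mul_of_nonneg_right this hnv
end

section
/- Suppose Ω ⊂ ℝⁿ is such that for every q ∈ L_{2,0}(Ω), the solution u ∈ H¹(Ω) ∩ L_{2,0}(Ω) of the variational Neumann problem ∫_Ω ∇u·∇v dx = ∫_Ω q v dx for all v ∈ H¹(Ω) ∩ L_{2,0}(Ω) belongs to H²(Ω) with ‖u‖_{H²(Ω)} ≲ ‖q‖_{L₂(Ω)}. Then the Leray projector Π is bounded on ℍ¹(Ω), i.e., Π ∈ L(ℍ¹(Ω),ℍ¹(Ω)). -/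
open scoped RealInnerProductSpace

/-!
Write `u − Π u = ∇z` by the Helmholtz decomposition. Testing with `∇v`, orthogonality of `ℋ⁰(Ω)`
to gradients and integration by parts show that `z` is the weak Neumann solution with data
`−div u ∈ L_{2,0}(Ω)`. By `H²`-regularity `∇z ∈ ℍ¹(Ω)` with `‖∇z‖ ≲ ‖div u‖ ≲ ‖u‖`, so
`Π u = u − ∇z` lies in `ℍ¹(Ω)` with norm `≲ ‖u‖`.
-/

theorem inner_grad_eq_inner_neg_div_of_helmholtz {H S Hb Q : Type*}
    [NormedAddCommGroup H] [InnerProductSpace ℝ H] [NormedAddCommGroup S] [InnerProductSpace ℝ S]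
    (K : Submodule ℝ H) [K.HasOrthogonalProjection]
    (ι : Hb → H) (divb : Hb → S) (gradQ : Q → H) (ιQS : Q → S)
    (hIBP : ∀ (u : Hb) (v : Q), ⟪ι u, gradQ v⟫ = - ⟪divb u, ιQS v⟫)
    (horth : ∀ k ∈ K, ∀ v : Q, ⟪k, gradQ v⟫ = 0)
    {u : Hb} {z : Q} (hz : gradQ z = ι u - (K.orthogonalProjectionOnto (ι u) : H)) (v : Q) :
    ⟪gradQ z, gradQ v⟫ = ⟪-divb u, ιQS v⟫ := by
  rw [hz, inner_sub_left, horth _ (K.orthogonalProjectionOnto (ι u)).2 v, hIBP u v,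
    inner_neg_left, sub_zero]

theorem ContinuousLinearMap.norm_sub_apply_le_of_norm_le {E F G : Type*}
    [SeminormedAddCommGroup E] [NormedSpace ℝ E] [SeminormedAddCommGroup F] [NormedSpace ℝ F]
    [SeminormedAddCommGroup G] [NormedSpace ℝ G]
    (g : F →L[ℝ] E) (d : E →L[ℝ] G) {C : ℝ} (hC : 0 ≤ C) {u : E} {w : F}
    (hw : ‖w‖ ≤ C * ‖d u‖) :
    ‖u - g w‖ ≤ (1 + ‖g‖ * C * ‖d‖) * ‖u‖ :=
  calc ‖u - g w‖ ≤ ‖u‖ + ‖g‖ * ‖w‖ := (norm_sub_le _ _).trans (by gcongr; exact g.le_opNorm w)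
    _ ≤ ‖u‖ + ‖g‖ * (C * (‖d‖ * ‖u‖)) := by gcongr; exact hw.trans (by gcongr; exact d.le_opNorm u)
    _ = (1 + ‖g‖ * C * ‖d‖) * ‖u‖ := by ring

theorem leray_projector_bounded_of_H2_regularity_general
    {H Hb S Q H2 : Type*}
    [NormedAddCommGroup H] [InnerProductSpace ℝ H]
    [NormedAddCommGroup Hb] [InnerProductSpace ℝ Hb]
    [NormedAddCommGroup S] [InnerProductSpace ℝ S]
    [NormedAddCommGroup Q] [InnerProductSpace ℝ Q]
    [NormedAddCommGroup H2] [InnerProductSpace ℝ H2]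
    (K : Submodule ℝ H) [CompleteSpace K]   -- `ℋ⁰(Ω)`, a closed subspace of `L₂(Ω)ⁿ`
    (ι : Hb →L[ℝ] H)
    (divb : Hb →L[ℝ] S) (S0 : Submodule ℝ S)
    (hdiv0 : ∀ u : Hb, divb u ∈ S0)         -- `∫_Ω div u dx = 0` since `u·n = 0`
    (gradQ : Q →L[ℝ] H) (ιQS : Q →L[ℝ] S)
    (ιH2Q : H2 →L[ℝ] Q) (gradH2 : H2 →L[ℝ] Hb)
    (hgrad : ∀ z2 : H2, ι (gradH2 z2) = gradQ (ιH2Q z2))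
    -- integration by parts on `ℍ¹(Ω)` (no boundary term since `u·n = 0` on `∂Ω`):
    (hIBP : ∀ (u : Hb) (v : Q), ⟪ι u, gradQ v⟫ = - ⟪divb u, ιQS v⟫)
    -- Helmholtz decomposition: `(Id − Π) u ∈ ∇(H¹(Ω) ∩ L_{2,0}(Ω))` and
    -- `ℋ⁰(Ω) ⊥ ∇(H¹(Ω) ∩ L_{2,0}(Ω))`:
    (hHelm : ∀ uH : H, ∃ z : Q, gradQ z = uH - (Submodule.orthogonalProjectionOnto K uH : H))
    (horth : ∀ k ∈ K, ∀ v : Q, ⟪k, gradQ v⟫ = 0)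
    -- the `H²(Ω)`-regularity assumption for the Neumann problem:
    (hreg : ∃ C > 0, ∀ q ∈ S0, ∀ z : Q,
      (∀ v : Q, ⟪gradQ z, gradQ v⟫ = ⟪q, ιQS v⟫) →
      ∃ z2 : H2, ιH2Q z2 = z ∧ ‖z2‖ ≤ C * ‖q‖) :
    -- conclusion: `Π ∈ 𝓛(ℍ¹(Ω), ℍ¹(Ω))`:
    ∃ C > 0, ∀ u : Hb, ∃ pu : Hb,
      ι pu = (Submodule.orthogonalProjectionOnto K (ι u) : H) ∧ ‖pu‖ ≤ C * ‖u‖ := by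
  obtain ⟨C, hC, hregC⟩ := hreg
  refine ⟨1 + ‖gradH2‖ * C * ‖divb‖, by positivity, fun u => ?_⟩
  obtain ⟨z, hz⟩ := hHelm (ι u)
  obtain ⟨z2, hz2, hz2_le⟩ := hregC (-divb u) (neg_mem (hdiv0 u)) z
    (inner_grad_eq_inner_neg_div_of_helmholtz K ι divb gradQ ιQS hIBP horth hz)
  refine ⟨u - gradH2 z2, ?_, gradH2.norm_sub_apply_le_of_norm_le divb hC.le ?_⟩
  · rw [map_sub, hgrad, hz2, hz, sub_sub_cancel]
  · rwa [norm_neg] at hz2_le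

/-- **(Proposition 2.8): if for every `q ∈ L_{2,0}(Ω)` the solution
`z ∈ H¹(Ω) ∩ L_{2,0}(Ω)` of the variational Neumann problem
`∫_Ω ∇z·∇v dx = ∫_Ω q v dx` (for all `v ∈ H¹(Ω) ∩ L_{2,0}(Ω)`) belongs to `H²(Ω)`
with `‖z‖_{H²(Ω)} ≲ ‖q‖_{L₂(Ω)}`, then the Leray projector `Π` is bounded on
`ℍ¹(Ω)`, i.e. `Π ∈ 𝓛(ℍ¹(Ω), ℍ¹(Ω))`.**

Abstract rendering:
* `H` = `L₂(Ω)ⁿ` with the closed subspace `K` = `ℋ⁰(Ω)`; `Π = orthogonalProjection K`.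
* `Hb` = `ℍ¹(Ω)` with its continuous embedding `ι : Hb → H`, spatial divergence
  `div : Hb → S` (`S = L₂(Ω)`), `S0 = L_{2,0}(Ω) ⊆ S`.
* `Q` = `H¹(Ω) ∩ L_{2,0}(Ω)` with gradient `gradQ : Q → H` and embedding `ιQS : Q → S`;
  `H2` = `H²(Ω) ∩ L_{2,0}(Ω)` with embedding `ιH2Q : H2 → Q` and gradient
  `gradH2 : H2 → Hb` (for the Neumann solution `∇z·n = 0`, so `∇z ∈ ℍ¹(Ω)`).
* Hypotheses record: mean-zero of `div u` for `u ∈ ℍ¹(Ω)`; the integration by parts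
  `∫ u·∇v = −∫ (div u) v` (no boundary term since `u·n = 0`); the Helmholtz
  decomposition `L₂(Ω)ⁿ = ℋ⁰(Ω) ⊕⊥ ∇(H¹(Ω) ∩ L_{2,0}(Ω))`; and the `H²`-regularity
  assumption of the proposition.
Conclusion: `Π` maps `ℍ¹(Ω)` boundedly into itself. -/
theorem leray_projector_bounded_of_H2_regularity
    {H Hb S Q H2 : Type*}
    [NormedAddCommGroup H] [InnerProductSpace ℝ H] [CompleteSpace H]
    [NormedAddCommGroup Hb] [InnerProductSpace ℝ Hb] [CompleteSpace Hb]
    [NormedAddCommGroup S] [InnerProductSpace ℝ S] [CompleteSpace S]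
    [NormedAddCommGroup Q] [InnerProductSpace ℝ Q] [CompleteSpace Q]
    [NormedAddCommGroup H2] [InnerProductSpace ℝ H2] [CompleteSpace H2]
    (K : Submodule ℝ H) [CompleteSpace K]   -- `ℋ⁰(Ω)`, a closed subspace of `L₂(Ω)ⁿ`
    (ι : Hb →L[ℝ] H) (hι : Function.Injective ι)
    (divb : Hb →L[ℝ] S) (S0 : Submodule ℝ S)
    (hdiv0 : ∀ u : Hb, divb u ∈ S0)         -- `∫_Ω div u dx = 0` since `u·n = 0`
    (gradQ : Q →L[ℝ] H) (ιQS : Q →L[ℝ] S)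
    (ιH2Q : H2 →L[ℝ] Q) (gradH2 : H2 →L[ℝ] Hb)
    (hgrad : ∀ z2 : H2, ι (gradH2 z2) = gradQ (ιH2Q z2))
    -- integration by parts on `ℍ¹(Ω)` (no boundary term since `u·n = 0` on `∂Ω`):
    (hIBP : ∀ (u : Hb) (v : Q), ⟪ι u, gradQ v⟫ = - ⟪divb u, ιQS v⟫)
    -- Helmholtz decomposition: `(Id − Π) u ∈ ∇(H¹(Ω) ∩ L_{2,0}(Ω))` and
    -- `ℋ⁰(Ω) ⊥ ∇(H¹(Ω) ∩ L_{2,0}(Ω))`: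
    (hHelm : ∀ uH : H, ∃ z : Q, gradQ z = uH - (Submodule.orthogonalProjectionOnto K uH : H))
    (horth : ∀ k ∈ K, ∀ v : Q, ⟪k, gradQ v⟫ = 0)
    -- the `H²(Ω)`-regularity assumption for the Neumann problem:
    (hreg : ∃ C > 0, ∀ q ∈ S0, ∀ z : Q,
      (∀ v : Q, ⟪gradQ z, gradQ v⟫ = ⟪q, ιQS v⟫) →
      ∃ z2 : H2, ιH2Q z2 = z ∧ ‖z2‖ ≤ C * ‖q‖) :
    -- conclusion: `Π ∈ 𝓛(ℍ¹(Ω), ℍ¹(Ω))`: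
    ∃ C > 0, ∀ u : Hb, ∃ pu : Hb,
      ι pu = (Submodule.orthogonalProjectionOnto K (ι u) : H) ∧ ‖pu‖ ≤ C * ‖u‖ :=
  leray_projector_bounded_of_H2_regularity_general K ι divb S0 hdiv0 gradQ ιQS ιH2Q gradH2 hgrad
    hIBP hHelm horth hreg
end
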